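/- arXiv:1201.3995 — 2 statements merged into one kernel-verified Lean document; each statement's English description precedes it below -/
import Mathlib

section
/- The lca reconciliation is the pointwise minimum reconciliation: for any reconciliation f between a gene tree G and a species tree S, and any node u of G, λ(u) ≤_S f(u), where λ is the lca reconciliation. -/
/-- A finite rooted tree encoded by a parent function: the root is a fixed
point of `parent` and every node reaches the root by iterating `parent`. -/
structure PRTree where
  V : Type
  fintypeV : Fintype V
  root : V
  parent : V → V
  parent_root : parent root = root
  reaches_root : ∀ v : V, ∃ n : ℕ, parent^[n] v = root

namespace PRTree

variable (T : PRTree)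

/-- `anc v u` : `u` lies on the unique path from the root to `v`
(i.e. `u` is an ancestor of `v` or `u = v`); this is the order `v ≤ u`. -/
def anc (v u : T.V) : Prop := ∃ n : ℕ, T.parent^[n] v = u

/-- `c` is a child of `p`. -/
def childOf (c p : T.V) : Prop := T.parent c = p ∧ c ≠ p

/-- A leaf is a node with no children. -/
def IsLeaf (v : T.V) : Prop := ∀ c : T.V, ¬ T.childOf c v

/-- `x` is a common ancestor of the set `I`. -/
def commonAnc (I : Set T.V) (x : T.V) : Prop := ∀ y ∈ I, T.anc y x

/-- `x` is a least common ancestor of `I`: a common ancestor none of whose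
children is a common ancestor of `I`. -/
def isLCA (I : Set T.V) (x : T.V) : Prop :=
  T.commonAnc I x ∧ ∀ c : T.V, T.childOf c x → ¬ T.commonAnc I c

/-- The set of leaves lying below (or equal to) `u`. -/
def leafSet (u : T.V) : Set T.V := {x | T.IsLeaf x ∧ T.anc x u}

/-- Every internal node has either no children (leaf) or exactly two children. -/
def IsBinary : Prop :=
  ∀ v : T.V, T.IsLeaf v ∨
    ∃ c₁ c₂ : T.V, c₁ ≠ c₂ ∧ ∀ c : T.V, T.childOf c v ↔ (c = c₁ ∨ c = c₂)

end PRTree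

/-!
Pick a leaf `x` below `u`. Every leaf `y` below `u` satisfies `lab y = f y ≤ f u`, so `f u` is a
common ancestor of the labels of the leaves below `u`, a nonempty set. In a rooted tree the
ancestors of a node form a chain, so `λ u` and `f u` are comparable; were `f u` strictly below
`λ u`, the child of `λ u` on the path to `f u` would be a common ancestor, contradicting the
definition of `λ u`. The leaf `x` exists because the descendant order of a finite tree is
well founded: a cycle of `parent` can only be the loop at the root.
-/

namespace PRTree

variable {T : PRTree}

theorem anc_refl (v : T.V) : T.anc v v := ⟨0, rfl⟩

theorem anc_trans {a b c : T.V} (hab : T.anc a b) (hbc : T.anc b c) : T.anc a c := by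
  obtain ⟨n, rfl⟩ := hab
  obtain ⟨m, rfl⟩ := hbc
  exact ⟨m + n, Function.iterate_add_apply _ _ _ _⟩

theorem anc_of_childOf {c p : T.V} (h : T.childOf c p) : T.anc c p := ⟨1, h.1⟩

theorem iterate_parent_eq_root {v : T.V} {k n : ℕ} (hk : T.parent^[k] v = T.root)
    (hkn : k ≤ n) : T.parent^[n] v = T.root := by
  rw [← Nat.sub_add_cancel hkn, Function.iterate_add_apply, hk,
    Function.iterate_fixed T.parent_root]

theorem eq_root_of_iterate_parent_eq_self {x : T.V} {p : ℕ} (hp : 0 < p)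
    (h : T.parent^[p] x = x) : x = T.root := by
  obtain ⟨k, hk⟩ := T.reaches_root x
  calc x = T.parent^[p * k] x := by rw [Function.iterate_mul, Function.iterate_fixed h]
    _ = T.root := iterate_parent_eq_root hk (Nat.le_mul_of_pos_left k hp)

theorem anc_antisymm {x y : T.V} (hxy : T.anc x y) (hyx : T.anc y x) : x = y := by
  obtain ⟨n, hn⟩ := hxy
  obtain ⟨m, hm⟩ := hyx
  rcases Nat.eq_zero_or_pos (m + n) with h0 | hpos
  · rw [← hn, (Nat.add_eq_zero_iff.mp h0).2, Function.iterate_zero_apply]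
  · have hx : T.parent^[m + n] x = x := by rw [Function.iterate_add_apply, hn, hm]
    have hy : T.parent^[n + m] y = y := by rw [Function.iterate_add_apply, hm, hn]
    rw [eq_root_of_iterate_parent_eq_self hpos hx,
      eq_root_of_iterate_parent_eq_self (by omega) hy]

theorem anc_total_of_anc {y a b : T.V} (ha : T.anc y a) (hb : T.anc y b) :
    T.anc a b ∨ T.anc b a := by
  obtain ⟨n, rfl⟩ := ha
  obtain ⟨m, rfl⟩ := hb
  rcases le_total n m with h | h
  · exact Or.inl ⟨m - n, by rw [← Function.iterate_add_apply, Nat.sub_add_cancel h]⟩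
  · exact Or.inr ⟨n - m, by rw [← Function.iterate_add_apply, Nat.sub_add_cancel h]⟩

theorem exists_childOf_of_anc_of_ne {z x : T.V} (h : T.anc z x) (hne : z ≠ x) :
    ∃ c, T.childOf c x ∧ T.anc z c := by
  classical
  replace h : ∃ n, T.parent^[n] z = x := h
  have hn : 0 < Nat.find h :=
    Nat.pos_of_ne_zero fun h0 => hne (by simpa [h0] using Nat.find_spec h)
  refine ⟨T.parent^[Nat.find h - 1] z, ⟨?_, Nat.find_min h (by omega)⟩, _, rfl⟩
  rw [← Function.iterate_succ_apply' T.parent, Nat.succ_eq_add_one, Nat.sub_add_cancel hn]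
  exact Nat.find_spec h

theorem commonAnc.of_anc {I : Set T.V} {z c : T.V} (hz : T.commonAnc I z) (hzc : T.anc z c) :
    T.commonAnc I c :=
  fun y hy => anc_trans (hz y hy) hzc

theorem isLCA.anc_of_commonAnc {I : Set T.V} {x z : T.V} (hx : T.isLCA I x) (hI : I.Nonempty)
    (hz : T.commonAnc I z) : T.anc x z := by
  rcases eq_or_ne z x with rfl | hne
  · exact anc_refl z
  obtain ⟨y, hy⟩ := hI
  refine (anc_total_of_anc (hx.1 y hy) (hz y hy)).resolve_right fun hzx => ?_
  obtain ⟨c, hcx, hzc⟩ := exists_childOf_of_anc_of_ne hzx hne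
  exact hx.2 c hcx (hz.of_anc hzc)

theorem wellFounded_strictAnc : WellFounded fun a b : T.V => T.anc a b ∧ a ≠ b :=
  haveI := T.fintypeV
  @Finite.wellFounded_of_trans_of_irrefl _ _ _
    ⟨fun _ _ _ hab hbc => ⟨anc_trans hab.1 hbc.1, fun hac =>
      hab.2 (anc_antisymm hab.1 (hac ▸ hbc.1))⟩⟩
    ⟨fun _ h => h.2 rfl⟩

/-- A minimal descendant of `u` is a leaf. -/
theorem exists_mem_leafSet (u : T.V) : ∃ x, x ∈ T.leafSet u := by
  obtain ⟨m, hmu, hmin⟩ := wellFounded_strictAnc.has_min {x | T.anc x u} ⟨u, anc_refl u⟩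
  refine ⟨m, fun c hc => ?_, hmu⟩
  exact hmin c (anc_trans (anc_of_childOf hc) hmu) ⟨anc_of_childOf hc, hc.2⟩

end PRTree

theorem stmt_4_general (G S : PRTree) (lab : G.V → S.V)
    (lam : G.V → S.V)
    (hlam : ∀ u : G.V, S.isLCA (lab '' {x | G.IsLeaf x ∧ G.anc x u}) (lam u))
    (f : G.V → S.V)
    (hf1 : ∀ x : G.V, G.IsLeaf x → f x = lab x)
    (hf2 : ∀ g g' : G.V, G.anc g' g → S.anc (f g') (f g)) :
    ∀ u : G.V, S.anc (lam u) (f u) := by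
  intro u
  obtain ⟨x, hx⟩ := G.exists_mem_leafSet u
  have hfu : S.commonAnc (lab '' G.leafSet u) (f u) := by
    rintro _ ⟨y, ⟨hy, hyu⟩, rfl⟩
    exact hf1 y hy ▸ hf2 u y hyu
  exact (hlam u).anc_of_commonAnc ⟨lab x, x, hx, rfl⟩ hfu

/-- The lca reconciliation is the pointwise minimum
reconciliation: for any reconciliation `f` (leaf-preserving and
order-preserving) between a gene tree `G` and a species tree `S`, and any node
`u` of `G`, `lam u ≤_S f u`, where `lam` is the lca reconciliation. -/
theorem stmt_4 (G S : PRTree) (lab : G.V → S.V)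
    (hlab : ∀ x : G.V, G.IsLeaf x → S.IsLeaf (lab x))
    (lam : G.V → S.V)
    (hlam : ∀ u : G.V, S.isLCA (lab '' {x | G.IsLeaf x ∧ G.anc x u}) (lam u))
    (f : G.V → S.V)
    (hf1 : ∀ x : G.V, G.IsLeaf x → f x = lab x)
    (hf2 : ∀ g g' : G.V, G.anc g' g → S.anc (f g') (f g)) :
    ∀ u : G.V, S.anc (lam u) (f u) :=
  stmt_4_general G S lab lam hlam f hf1 hf2
end

section
/- (Mirsky's theorem, dual of Dilworth) In a finite partially ordered set P, the minimum number of antichains into which P can be partitioned equals the maximum size of a chain in P. -/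
/-!
Let the height of `a` be the largest size of a chain with top element `a`. Height is strictly
monotone, so its level sets partition `P` into antichains; their number is at most the maximal
height, which is attained by a chain. Conversely, a chain meets every block of an antichain
partition at most once, so no chain is longer than any antichain partition.
-/

open Finset

theorem Nat.sInf_eq_sSup_of_forall_le_of_exists_le {S T : Set ℕ}
    (hle : ∀ n ∈ S, ∀ k ∈ T, k ≤ n) (hex : ∃ n ∈ S, ∃ k ∈ T, n ≤ k) : sInf S = sSup T := by
  obtain ⟨n, hn, k, hk, hnk⟩ := hex
  have hT : BddAbove T := ⟨n, hle n hn⟩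
  refine le_antisymm ?_ (csSup_le ⟨k, hk⟩ (hle _ (Nat.sInf_mem ⟨n, hn⟩)))
  calc sInf S ≤ n := Nat.sInf_le hn
    _ ≤ k := hnk
    _ ≤ sSup T := le_csSup hT hk

theorem IsChain.card_le_card_of_forall_exists_mem_antichain {α : Type*} {r : α → α → Prop}
    {C : Finset α} {𝒜 : Finset (Finset α)} (hC : IsChain r (C : Set α))
    (h𝒜 : ∀ A ∈ 𝒜, IsAntichain r (A : Set α)) (hcover : ∀ x ∈ C, ∃ A ∈ 𝒜, x ∈ A) :
    #C ≤ #𝒜 := by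
  choose! block hblock_mem hmem_block using hcover
  refine card_le_card_of_injOn block hblock_mem fun x hx y hy hxy => ?_
  exact inter_subsingleton_of_isChain_of_isAntichain hC (h𝒜 _ (hblock_mem x hx))
    ⟨hx, hmem_block x hx⟩ ⟨hy, hxy ▸ hmem_block y hy⟩

theorem StrictMono.isAntichain_setOf_eq {α β : Type*} [PartialOrder α] [Preorder β]
    {f : α → β} (hf : StrictMono f) (b : β) : IsAntichain (· ≤ ·) {x | f x = b} :=
  fun _ hx _ hy hne hle => (hf (hle.lt_of_ne hne)).ne (hx.trans hy.symm)

theorem Finpartition.card_parts_ofSetoid_ker_le {α β : Type*} [Fintype α] [DecidableEq α]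
    [DecidableEq β] (f : α → β) :
    #(ofSetoid (Setoid.ker f)).parts ≤ #(univ.image f) :=
  calc _ = #((univ.image f).image fun b => ({a | b = f a} : Finset α)) := by
        simp only [ofSetoid, ofSetSetoid_parts, image_image, Function.comp_def, Setoid.ker_def]
    _ ≤ _ := card_image_le

theorem StrictMono.exists_antichain_finpartition_card_le {α β : Type*} [PartialOrder α]
    [Fintype α] [DecidableEq α] [Preorder β] [DecidableEq β] {f : α → β} (hf : StrictMono f) :
    ∃ P : Finpartition (univ : Finset α),
      (∀ A ∈ P.parts, IsAntichain (· ≤ ·) (A : Set α)) ∧ #P.parts ≤ #(univ.image f) := by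
  refine ⟨.ofSetoid (Setoid.ker f), fun A hA => ?_, Finpartition.card_parts_ofSetoid_ker_le f⟩
  simp only [Finpartition.ofSetoid, Finpartition.ofSetSetoid_parts, mem_image, mem_univ,
    true_and] at hA
  obtain ⟨a, rfl⟩ := hA
  simpa [Setoid.ker_def, eq_comm] using hf.isAntichain_setOf_eq (f a)

section ChainHeight

variable {α : Type*} [PartialOrder α] [Fintype α]

open Classical in
noncomputable def chainsBelow (a : α) : Finset (Finset α) :=
  {C | IsChain (· ≤ ·) (C : Set α) ∧ ∀ x ∈ C, x ≤ a}

theorem mem_chainsBelow {C : Finset α} {a : α} :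
    C ∈ chainsBelow a ↔ IsChain (· ≤ ·) (C : Set α) ∧ ∀ x ∈ C, x ≤ a := by
  simp [chainsBelow]

noncomputable def chainHeight (a : α) : ℕ :=
  (chainsBelow a).sup card

theorem card_le_chainHeight {C : Finset α} {a : α} (hC : IsChain (· ≤ ·) (C : Set α))
    (ha : ∀ x ∈ C, x ≤ a) : #C ≤ chainHeight a :=
  le_sup (mem_chainsBelow.2 ⟨hC, ha⟩)

theorem exists_chain_card_eq_chainHeight (a : α) :
    ∃ C : Finset α, IsChain (· ≤ ·) (C : Set α) ∧ (∀ x ∈ C, x ≤ a) ∧ #C = chainHeight a := by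
  obtain ⟨C, hC, hcard⟩ :=
    exists_mem_eq_sup (chainsBelow a) ⟨∅, mem_chainsBelow.2 (by simp)⟩ card
  exact ⟨C, (mem_chainsBelow.1 hC).1, (mem_chainsBelow.1 hC).2, hcard.symm⟩

theorem one_le_chainHeight (a : α) : 1 ≤ chainHeight a :=
  card_le_chainHeight (C := {a}) (by simp) (by simp)

theorem chainHeight_strictMono : StrictMono (chainHeight : α → ℕ) := by
  classical
  intro b a hba
  obtain ⟨C, hC, hCb, hcard⟩ := exists_chain_card_eq_chainHeight b
  have hCa : ∀ x ∈ C, x ≤ a := fun x hx => (hCb x hx).trans hba.le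
  have hchain : IsChain (· ≤ ·) (insert a C : Set α) :=
    hC.insert fun x hx _ => Or.inr (hCa x hx)
  have hle := card_le_chainHeight (a := a) (C := insert a C) (by rwa [coe_insert])
    ((forall_mem_insert ..).2 ⟨le_rfl, hCa⟩)
  rwa [card_insert_of_notMem fun ha => (hCb a ha).not_gt hba, hcard, Nat.add_one_le_iff] at hle

theorem exists_chain_card_eq_sup_chainHeight :
    ∃ C : Finset α, IsChain (· ≤ ·) (C : Set α) ∧ #C = univ.sup (chainHeight : α → ℕ) := by
  rcases isEmpty_or_nonempty α with hα | hα
  · exact ⟨∅, by simp, by simp⟩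
  · obtain ⟨a, -, ha⟩ := exists_mem_eq_sup univ univ_nonempty (chainHeight : α → ℕ)
    obtain ⟨C, hC, -, hcard⟩ := exists_chain_card_eq_chainHeight a
    exact ⟨C, hC, hcard.trans ha.symm⟩

theorem card_image_chainHeight_le_sup :
    #(univ.image (chainHeight : α → ℕ)) ≤ univ.sup (chainHeight : α → ℕ) := by
  have : univ.image (chainHeight : α → ℕ) ⊆ Icc 1 (univ.sup (chainHeight : α → ℕ)) := by
    simp only [subset_iff, mem_image, mem_univ, true_and, mem_Icc, forall_exists_index,
      forall_apply_eq_imp_iff]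
    exact fun a => ⟨one_le_chainHeight a, le_sup (mem_univ a)⟩
  simpa using card_le_card this

end ChainHeight

theorem exists_antichain_finpartition_card_le_chain (α : Type*) [PartialOrder α] [Fintype α]
    [DecidableEq α] :
    ∃ P : Finpartition (univ : Finset α), (∀ A ∈ P.parts, IsAntichain (· ≤ ·) (A : Set α)) ∧
      ∃ C : Finset α, IsChain (· ≤ ·) (C : Set α) ∧ #P.parts ≤ #C := by
  obtain ⟨P, hP, hP_card⟩ :=
    (chainHeight_strictMono (α := α)).exists_antichain_finpartition_card_le
  obtain ⟨C, hC, hC_card⟩ := exists_chain_card_eq_sup_chainHeight (α := α)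
  exact ⟨P, hP, C, hC, hP_card.trans (hC_card ▸ card_image_chainHeight_le_sup)⟩

/-- Mirsky's theorem, dual of Dilworth: In a finite partially
ordered set, the minimum number of antichains into which the poset can be
partitioned equals the maximum size of a chain. -/
theorem stmt_8 (α : Type) [Fintype α] [PartialOrder α] [DecidableEq α] :
    sInf {n : ℕ | ∃ 𝒜 : Finset (Finset α), 𝒜.card = n ∧
        (∀ A ∈ 𝒜, IsAntichain (· ≤ ·) (A : Set α)) ∧
        (∀ a : α, ∃! A : Finset α, A ∈ 𝒜 ∧ a ∈ A)} =
    sSup {n : ℕ | ∃ C : Finset α, IsChain (· ≤ ·) (C : Set α) ∧ C.card = n} := by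
  apply Nat.sInf_eq_sSup_of_forall_le_of_exists_le
  · rintro _ ⟨𝒜, rfl, h𝒜, hunique⟩ _ ⟨C, hC, rfl⟩
    exact hC.card_le_card_of_forall_exists_mem_antichain h𝒜 fun x _ => (hunique x).exists
  · obtain ⟨P, hP, C, hC, hcard⟩ := exists_antichain_finpartition_card_le_chain α
    exact ⟨_, ⟨P.parts, rfl, hP, fun a => P.existsUnique_mem (mem_univ a)⟩, _, ⟨C, hC, rfl⟩, hcard⟩
end
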